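/- For every integer n ≥ 1, the number of UUU-equivalence classes of ballot paths of length n equals f_n, the n-th Fibonacci number. -/
import Mathlib


/-- A path is a list of steps: `true` is an up-step U, `false` is a down-step D. -/
abbrev Step := Bool

/-- The height of the `j`-th lattice point of the path `p`. -/
def pathHeight (p : List Bool) (j : ℕ) : ℤ :=
  ((p.take j).count true : ℤ) - ((p.take j).count false : ℤ)

/-- A ballot path: every prefix has at least as many U's as D's. -/
def IsBallot (p : List Bool) : Prop :=
  ∀ k : ℕ, (p.take k).count false ≤ (p.take k).count true

/-- A Dyck path: a ballot path with equally many U's and D's. -/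
def IsDyck (p : List Bool) : Prop :=
  IsBallot p ∧ p.count true = p.count false

/-- The string `τ` occurs at (0-indexed) position `i` of the path `p`. -/
def OccursAt (τ p : List Bool) (i : ℕ) : Prop :=
  (p.drop i).take τ.length = τ

/-- Two paths are `τ`-equivalent: same length and occurrences of `τ` at the same positions. -/
def PathEquiv (τ p q : List Bool) : Prop :=
  p.length = q.length ∧ ∀ i : ℕ, OccursAt τ p i ↔ OccursAt τ q i

/-- The setoid of `τ`-equivalence on ballot paths of length `n`. -/
def ballotSetoid (τ : List Bool) (n : ℕ) :
    Setoid {p : List Bool // IsBallot p ∧ p.length = n} where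
  r p q := PathEquiv τ p.1 q.1
  iseqv := ⟨fun _ => ⟨rfl, fun _ => Iff.rfl⟩,
            fun h => ⟨h.1.symm, fun i => (h.2 i).symm⟩,
            fun h1 h2 => ⟨h1.1.trans h2.1, fun i => (h1.2 i).trans (h2.2 i)⟩⟩

/-- The number of `τ`-equivalence classes of ballot paths of length `n`. -/
noncomputable def numBallotClasses (τ : List Bool) (n : ℕ) : ℕ :=
  Nat.card (Quotient (ballotSetoid τ n))

/-- The setoid of `τ`-equivalence on Dyck paths of semilength `n`. -/
def dyckSetoid (τ : List Bool) (n : ℕ) :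
    Setoid {p : List Bool // IsDyck p ∧ p.length = 2 * n} where
  r p q := PathEquiv τ p.1 q.1
  iseqv := ⟨fun _ => ⟨rfl, fun _ => Iff.rfl⟩,
            fun h => ⟨h.1.symm, fun i => (h.2 i).symm⟩,
            fun h1 h2 => ⟨h1.1.trans h2.1, fun i => (h1.2 i).trans (h2.2 i)⟩⟩

/-- The number of `τ`-equivalence classes of Dyck paths of semilength `n`. -/
noncomputable def numDyckClasses (τ : List Bool) (n : ℕ) : ℕ :=
  Nat.card (Quotient (dyckSetoid τ n))

namespace UUU

/-- letter of `p` at position `j`, `false` beyond the end. -/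
def g (p : List Bool) (j : ℕ) : Bool := p.getD j false

@[simp] lemma g_nil (j : ℕ) : g [] j = false := by simp [g]

@[simp] lemma g_cons_zero (b : Bool) (l : List Bool) : g (b :: l) 0 = b := rfl

@[simp] lemma g_cons_succ (b : Bool) (l : List Bool) (j : ℕ) :
    g (b :: l) (j+1) = g l j := rfl

lemma g_eq_false_of_le (p : List Bool) (j : ℕ) (h : p.length ≤ j) : g p j = false := by
  have : p[j]? = none := List.getElem?_eq_none h
  simp [g, List.getD_eq_getElem?_getD, this]

lemma g_eq_getElem (p : List Bool) (j : ℕ) (h : j < p.length) : g p j = p[j] := by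
  simp [g, List.getD_eq_getElem?_getD, List.getElem?_eq_getElem h]

/-- Boolean: `UUU` occurs at position `i`. -/
def occB (p : List Bool) (i : ℕ) : Bool := g p i && g p (i+1) && g p (i+2)

lemma take3_iff (l : List Bool) :
    l.take 3 = [true, true, true] ↔
      (g l 0 = true ∧ g l 1 = true ∧ g l 2 = true) := by
  rcases l with _ | ⟨a, _ | ⟨b, _ | ⟨c, r⟩⟩⟩ <;> simp [g, List.take]

lemma occursAt_iff (p : List Bool) (i : ℕ) :
    OccursAt [true, true, true] p i ↔ occB p i = true := by
  have hg : ∀ k, g (p.drop i) k = g p (i + k) := by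
    intro k; simp [g, List.getD_eq_getElem?_getD, List.getElem?_drop]
  unfold OccursAt occB
  rw [show ([true,true,true] : List Bool).length = 3 from rfl, take3_iff]
  simp [hg, Bool.and_assoc]

lemma occB_eq_false (p : List Bool) (i : ℕ) (h : p.length ≤ i + 2) : occB p i = false := by
  unfold occB
  rw [g_eq_false_of_le p (i+2) h]
  simp

/-- characteristic word of occurrences. -/
def charWord (p : List Bool) (m : ℕ) : List Bool := (List.range m).map (occB p)

@[simp] lemma charWord_length (p : List Bool) (m : ℕ) : (charWord p m).length = m := by
  simp [charWord]

lemma g_charWord (p : List Bool) (m : ℕ) (hp : p.length ≤ m + 2) (j : ℕ) :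
    g (charWord p m) j = occB p j := by
  rcases lt_or_ge j m with h | h
  · rw [g_eq_getElem _ _ (by simpa using h)]
    simp [charWord, h]
  · rw [g_eq_false_of_le _ _ (by simpa using h), occB_eq_false p j (by omega)]

inductive St | q0 | q1 | q2 | q3 | q4 | q5
deriving DecidableEq

open St

def tr : St → Bool → Option St
| q0, false => some q1 | q0, true => some q2
| q1, false => some q3 | q1, true => none
| q2, false => some q4 | q2, true => some q2
| q3, false => some q3 | q3, true => some q2
| q4, false => some q5 | q4, true => none
| q5, false => some q3 | q5, true => none

/-- The words of length `m` accepted from state `s`. -/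
def Wd : ℕ → St → Finset (List Bool)
| 0, _ => {[]}
| (m+1), s =>
    ((tr s false).elim ∅ fun t => (Wd m t).image (false :: ·)) ∪
    ((tr s true).elim ∅ fun t => (Wd m t).image (true :: ·))

lemma cons_injective (b : Bool) : Function.Injective (b :: · : List Bool → List Bool) := by
  intro x y h; simpa using h

lemma card_union_images (A B : Finset (List Bool)) :
    ((A.image (false :: ·)) ∪ (B.image (true :: ·))).card = A.card + B.card := by
  rw [Finset.card_union_of_disjoint, Finset.card_image_of_injective _ (cons_injective false),
    Finset.card_image_of_injective _ (cons_injective true)]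
  rw [Finset.disjoint_left]
  rintro x hx hy
  simp only [Finset.mem_image] at hx hy
  obtain ⟨a, _, rfl⟩ := hx
  obtain ⟨b, _, hb⟩ := hy
  simp at hb

lemma card_Wd_two (m : ℕ) (s t u : St) (hf : tr s false = some t) (ht : tr s true = some u) :
    (Wd (m+1) s).card = (Wd m t).card + (Wd m u).card := by
  simp only [Wd, hf, ht, Option.elim]
  exact card_union_images _ _

lemma card_Wd_one (m : ℕ) (s t : St) (hf : tr s false = some t) (ht : tr s true = none) :
    (Wd (m+1) s).card = (Wd m t).card := by
  simp only [Wd, hf, ht, Option.elim]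
  simpa using card_union_images (Wd m t) ∅

@[simp] lemma card_Wd_zero (s : St) : (Wd 0 s).card = 1 := rfl

lemma card_q5_eq_q1 : ∀ m, (Wd m q5).card = (Wd m q1).card := by
  intro m
  induction m with
  | zero => rfl
  | succ m ih =>
    rw [card_Wd_one m q5 q3 rfl rfl, card_Wd_one m q1 q3 rfl rfl]

lemma card_invariant : ∀ m, (Wd m q3).card + (Wd m q4).card
    = (Wd m q0).card + (Wd m q1).card := by
  intro m
  induction m with
  | zero => rfl
  | succ m ih =>
    rw [card_Wd_two m q3 q3 q2 rfl rfl, card_Wd_one m q4 q5 rfl rfl,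
      card_Wd_two m q0 q1 q2 rfl rfl, card_Wd_one m q1 q3 rfl rfl, card_q5_eq_q1]
    omega

lemma card_q0_rec (m : ℕ) : (Wd (m+2) q0).card = (Wd (m+1) q0).card + (Wd m q0).card := by
  rw [card_Wd_two (m+1) q0 q1 q2 rfl rfl, card_Wd_one m q1 q3 rfl rfl,
    card_Wd_two m q2 q4 q2 rfl rfl, card_Wd_two m q0 q1 q2 rfl rfl]
  have := card_invariant m
  omega

lemma card_q0_fib : ∀ m, (Wd m q0).card = Nat.fib (m + 2) := by
  have key : ∀ m, (Wd m q0).card = Nat.fib (m+2) ∧ (Wd (m+1) q0).card = Nat.fib (m+3) := by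
    intro m
    induction m with
    | zero =>
      constructor
      · rfl
      · rw [card_Wd_two 0 q0 q1 q2 rfl rfl]; rfl
    | succ m ih =>
      refine ⟨ih.2, ?_⟩
      rw [card_q0_rec m, ih.1, ih.2]
      have h1 : Nat.fib (m+4) = Nat.fib (m+2) + Nat.fib (m+3) := by
        rw [show m+4 = m+2+2 by ring, Nat.fib_add_two, show m+2+1 = m+3 by ring]
      ring_nf
      ring_nf at h1
      omega
  exact fun m => (key m).1

/-- membership test -/
def okF : St → List Bool → Bool
| _, [] => true
| s, b :: l => match tr s b with | none => false | some t => okF t l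

lemma mem_Wd : ∀ (m : ℕ) (s : St) (w : List Bool),
    w ∈ Wd m s ↔ w.length = m ∧ okF s w = true := by
  intro m
  induction m with
  | zero =>
    intro s w
    constructor
    · intro h
      have : w = [] := by simpa [Wd] using h
      subst this; exact ⟨rfl, rfl⟩
    · intro ⟨h1, _⟩
      have : w = [] := List.length_eq_zero_iff.mp h1
      subst this; simp [Wd]
  | succ m ih =>
    intro s w
    constructor
    · intro h
      simp only [Wd] at h
      rcases Finset.mem_union.mp h with h | h
      · rcases hf : tr s false with _ | t
        · rw [hf] at h; simp at h
        · rw [hf] at h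
          simp only [Option.elim, Finset.mem_image] at h
          obtain ⟨a, ha, rfl⟩ := h
          obtain ⟨hl, hok⟩ := (ih t a).mp ha
          exact ⟨by simp [hl], by simp [okF, hf, hok]⟩
      · rcases hf : tr s true with _ | t
        · rw [hf] at h; simp at h
        · rw [hf] at h
          simp only [Option.elim, Finset.mem_image] at h
          obtain ⟨a, ha, rfl⟩ := h
          obtain ⟨hl, hok⟩ := (ih t a).mp ha
          exact ⟨by simp [hl], by simp [okF, hf, hok]⟩
    · rintro ⟨h1, h2⟩
      rcases w with _ | ⟨b, l⟩
      · simp at h1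
      · simp only [Wd]
        rcases hf : tr s b with _ | t
        · rw [okF, hf] at h2; simp at h2
        · rw [okF, hf] at h2
          have hl : l ∈ Wd m t := (ih t l).mpr ⟨by simpa using h1, h2⟩
          apply Finset.mem_union.mpr
          cases b
          · left; rw [hf]; simp only [Option.elim, Finset.mem_image]; exact ⟨l, hl, rfl⟩
          · right; rw [hf]; simp only [Option.elim, Finset.mem_image]; exact ⟨l, hl, rfl⟩

open St in
/-- no factor 101 and no factor 1001 (in padded-by-false reading) -/
def NoF (w : List Bool) : Prop := ∀ j,
  ¬(g w j = true ∧ g w (j+1) = false ∧ g w (j+2) = true) ∧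
  ¬(g w j = true ∧ g w (j+1) = false ∧ g w (j+2) = false ∧ g w (j+3) = true)

open St in
def StartOK : St → List Bool → Prop
| q0, w => ¬(g w 0 = false ∧ g w 1 = true)
| q1, w => g w 0 = false
| q2, w => ¬(g w 0 = false ∧ g w 1 = true) ∧ ¬(g w 0 = false ∧ g w 1 = false ∧ g w 2 = true)
| q3, _ => True
| q4, w => g w 0 = false ∧ g w 1 = false
| q5, w => g w 0 = false

lemma NoF_nil : NoF [] := by intro j; simp

lemma NoF_cons (b : Bool) (l : List Bool) : NoF (b :: l) ↔
    ((¬(b = true ∧ g l 0 = false ∧ g l 1 = true) ∧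
      ¬(b = true ∧ g l 0 = false ∧ g l 1 = false ∧ g l 2 = true)) ∧ NoF l) := by
  constructor
  · intro h
    refine ⟨by simpa using h 0, fun j => by simpa using h (j+1)⟩
  · rintro ⟨h0, h⟩ j
    cases j with
    | zero => simpa using h0
    | succ j => simpa using h j

lemma okF_iff : ∀ (w : List Bool) (s : St), okF s w = true ↔ (NoF w ∧ StartOK s w) := by
  intro w
  induction w with
  | nil =>
    intro s
    have : NoF [] := NoF_nil
    cases s <;> simp [okF, StartOK, this]
  | cons b l ih =>
    intro s
    cases s <;> cases b <;>
      simp only [okF, tr, NoF_cons, StartOK, ih, g_cons_zero, g_cons_succ] <;>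
      constructor <;> intro h <;>
      rcases (g l 0).eq_false_or_eq_true with h0 | h0 <;>
      rcases (g l 1).eq_false_or_eq_true with h1 | h1 <;>
      rcases (g l 2).eq_false_or_eq_true with h2 | h2 <;>
      simp_all <;> tauto

def fillB (k : ℕ) : Bool := decide (k % 3 ≠ 2)

def inR (w : List Bool) : ℕ → Bool
| 0 => g w 0
| 1 => g w 1 || g w 0
| (j+2) => g w (j+2) || g w (j+1) || g w j

def ph (w : List Bool) : ℕ → ℕ
| 0 => 0
| (j+1) => if inR w j then 2 else (ph w j + 1) % 3

def letterF (w : List Bool) (j : ℕ) : Bool :=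
  if inR w j then true else if g w (j+1) then false else fillB (ph w j)

def realize (w : List Bool) (n : ℕ) : List Bool := (List.range n).map (letterF w)

@[simp] lemma realize_length (w : List Bool) (n : ℕ) : (realize w n).length = n := by
  simp [realize]

lemma ph_lt (w : List Bool) : ∀ j, ph w j < 3
| 0 => by simp [ph]
| (j+1) => by
    rw [ph]
    split
    · omega
    · exact Nat.mod_lt _ (by omega)

lemma inR_self_of_g {w : List Bool} {j : ℕ} (h : g w j = true) : inR w j = true := by
  rcases j with _ | _ | j <;> simp [inR, h]

lemma inR_succ_of_g {w : List Bool} {j : ℕ} (h : g w j = true) : inR w (j+1) = true := by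
  rcases j with _ | j <;> simp [inR, h]

lemma inR_succ2_of_g {w : List Bool} {j : ℕ} (h : g w j = true) : inR w (j+2) = true := by
  simp [inR, h]

lemma letterF_of_inR {w : List Bool} {j : ℕ} (h : inR w j = true) : letterF w j = true := by
  simp [letterF, h]

lemma g_realize_lt (w : List Bool) (n j : ℕ) (h : j < n) :
    g (realize w n) j = letterF w j := by
  rw [g_eq_getElem _ _ (by simpa using h)]
  simp [realize, h]

lemma letters_all_true {w : List Bool} {i : ℕ} (h : g w i = true) :
    letterF w i = true ∧ letterF w (i+1) = true ∧ letterF w (i+2) = true :=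
  ⟨letterF_of_inR (inR_self_of_g h), letterF_of_inR (inR_succ_of_g h),
   letterF_of_inR (inR_succ2_of_g h)⟩

lemma letters_not_all {w : List Bool} (hN : NoF w) {i : ℕ} (hi : g w i = false) :
    letterF w i = false ∨ letterF w (i+1) = false ∨ letterF w (i+2) = false := by
  rcases i with _ | _ | k
  · -- i = 0
    cases hD : g w 1
    · cases hE : g w 2
      · -- third letter: ph w 2 = 2
        right; right
        have h0 : inR w 0 = false := by simp [inR, hi]
        have h1 : inR w 1 = false := by simp [inR, hi, hD]
        have h2 : inR w 2 = false := by simp [inR, hi, hD, hE]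
        have hp : ph w 2 = 2 := by simp [ph, h0, h1]
        simp [letterF, h2, hp, fillB]
      · -- E true: second letter forced false
        right; left
        have h1 : inR w 1 = false := by simp [inR, hi, hD]
        simp [letterF, h1, hE]
    · -- D true: first letter forced false
      left
      have h0 : inR w 0 = false := by simp [inR, hi]
      simp [letterF, h0, hD]
  · -- i = 1
    cases hD : g w 2
    · cases hB : g w 0
      · -- B false, D false: phases 1,2 at positions 1,2
        cases hE : g w 3
        · right; left
          have h0 : inR w 0 = false := by simp [inR, hB]
          have h1 : inR w 1 = false := by simp [inR, hi, hB]
          have h2 : inR w 2 = false := by simp [inR, hi, hB, hD]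
          have hp : ph w 2 = 2 := by simp [ph, h0, h1]
          simp [letterF, h2, hp, hE, fillB]
        · right; left
          have h2 : inR w 2 = false := by simp [inR, hi, hB, hD]
          simp [letterF, h2, hE]
      · -- B true, D false: third letter (position 3)
        cases hE : g w 3
        · right; right
          have h2 : inR w 2 = true := by simp [inR, hB]
          have h3 : inR w 3 = false := by simp [inR, hi, hD, hE]
          have hp : ph w 3 = 2 := by simp [ph, h2]
          cases hF : g w 4
          · simp [letterF, h3, hF, hp, fillB]
          · simp [letterF, h3, hF]
        · -- 1001 violation at j = 0
          exact absurd ⟨hB, hi, hD, hE⟩ (hN 0).2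
    · -- D true
      cases hB : g w 0
      · left
        have h1 : inR w 1 = false := by simp [inR, hi, hB]
        simp [letterF, h1, hD]
      · exact absurd ⟨hB, hi, hD⟩ (hN 0).1
  · -- i = k+2; A = g w k, B = g w (k+1), C = g w (k+2) = false
    show letterF w (k+2) = false ∨ letterF w (k+3) = false ∨ letterF w (k+4) = false
    replace hi : g w (k+2) = false := hi
    cases hD : g w (k+3)
    · cases hB : g w (k+1)
      · cases hA : g w k
        · -- A,B,D all false
          have h0 : inR w (k+2) = false := by simp [inR, hi, hB, hA]
          have h1 : inR w (k+3) = false := by simp [inR, hi, hB, hD]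
          cases hE : g w (k+4)
          · have h2 : inR w (k+4) = false := by simp [inR, hi, hD, hE]
            have e1 : ph w (k+3) = (ph w (k+2) + 1) % 3 := by rw [ph, h0]; rfl
            have e2 : ph w (k+4) = (ph w (k+3) + 1) % 3 := by rw [ph, h1]; rfl
            have hlt := ph_lt w (k+2)
            rcases (show ph w (k+2) = 0 ∨ ph w (k+2) = 1 ∨ ph w (k+2) = 2 by omega)
              with hp | hp | hp
            · rw [hp] at e1; norm_num at e1
              rw [e1] at e2; norm_num at e2
              right; right
              cases hF : g w (k+5)
              · simp [letterF, h2, hF, e2, fillB]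
              · simp [letterF, h2, hF]
            · rw [hp] at e1; norm_num at e1
              right; left
              simp [letterF, h1, hE, e1, fillB]
            · left
              simp [letterF, h0, hD, hp, fillB]
          · right; left
            have h1 : inR w (k+3) = false := by simp [inR, hi, hB, hD]
            simp [letterF, h1, hE]
        · -- A true, B false, D false: second letter
          cases hE : g w (k+4)
          · right; left
            have h1 : inR w (k+3) = false := by simp [inR, hi, hB, hD]
            have h0 : inR w (k+2) = true := by simp [inR, hA]
            have hp : ph w (k+3) = 2 := by simp [ph, h0]
            simp [letterF, h1, hE, hp, fillB]
          · right; left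
            have h1 : inR w (k+3) = false := by simp [inR, hi, hB, hD]
            simp [letterF, h1, hE]
      · -- B true, D false: third letter
        cases hE : g w (k+4)
        · right; right
          have h1 : inR w (k+3) = true := by simp [inR, hB]
          have h2 : inR w (k+4) = false := by simp [inR, hi, hD, hE]
          have hp : ph w (k+4) = 2 := by simp [ph, h1]
          cases hF : g w (k+5)
          · simp [letterF, h2, hF, hp, fillB]
          · simp [letterF, h2, hF]
        · -- 1001 violation at j = k+1
          exact absurd ⟨hB, hi, hD, hE⟩ (hN (k+1)).2
    · -- D true: first letter false, need A, B false
      cases hB : g w (k+1)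
      · cases hA : g w k
        · left
          have h0 : inR w (k+2) = false := by simp [inR, hi, hB, hA]
          simp [letterF, h0, hD]
        · -- 1001 violation at j = k
          exact absurd ⟨hA, hB, hi, hD⟩ (hN k).2
      · -- 101 violation at j = k+1
        exact absurd ⟨hB, hi, hD⟩ (hN (k+1)).1

def hgt (w : List Bool) : ℕ → ℤ
| 0 => 0
| (j+1) => hgt w j + (if letterF w j then 1 else -1)

lemma hgt_invariant (w : List Bool) (hS : ¬(g w 0 = false ∧ g w 1 = true)) : ∀ j,
    0 ≤ hgt w j ∧ (1 ≤ j → inR w j = false →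
      (1 ≤ hgt w j ∧ (ph w j = 2 → 2 ≤ hgt w j))) := by
  intro j
  induction j using Nat.strong_induction_on with
  | _ j IH =>
  rcases j with _ | j
  · exact ⟨le_refl _, by omega⟩
  · have IHj := IH j (by omega)
    cases hR : inR w j
    · -- not in run at j
      cases hF : g w (j+1)
      · -- free fill
        have hup : hgt w (j+1) = hgt w j + (if fillB (ph w j) then 1 else -1) := by
          rw [hgt, letterF, hR, hF]; simp
        have hph : ph w (j+1) = (ph w j + 1) % 3 := by rw [ph, hR]; rfl
        have hlt := ph_lt w j
        rcases (show ph w j = 0 ∨ ph w j = 1 ∨ ph w j = 2 by omega) with hp | hp | hp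
        · rw [hp] at hup hph; simp [fillB] at hup hph
          refine ⟨by omega, fun _ _ => ⟨by omega, fun h2 => by omega⟩⟩
        · -- ph = 1 : j ≥ 1 since ph w 0 = 0
          have hj1 : 1 ≤ j := by
            rcases Nat.eq_zero_or_pos j with rfl | h
            · rw [show ph w 0 = 0 from rfl] at hp; omega
            · exact h
          have hb := (IHj.2 hj1 hR).1
          rw [hp] at hup hph; simp [fillB] at hup hph
          refine ⟨by omega, fun _ _ => ⟨by omega, fun h2 => by omega⟩⟩
        · have hj1 : 1 ≤ j := by
            rcases Nat.eq_zero_or_pos j with rfl | h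
            · rw [show ph w 0 = 0 from rfl] at hp; omega
            · exact h
          have hb := (IHj.2 hj1 hR).2 hp
          rw [hp] at hup hph; simp [fillB] at hup hph
          refine ⟨by omega, fun _ _ => ⟨by omega, fun h2 => by rw [hph] at h2; omega⟩⟩
      · -- forced D
        have hup : hgt w (j+1) = hgt w j + -1 := by
          rw [hgt, letterF, hR, hF]; simp
        have hge1 : 1 ≤ hgt w j := by
          rcases Nat.eq_zero_or_pos j with rfl | hj1
          · exact absurd ⟨by simpa [inR] using hR, hF⟩ hS
          · exact (IHj.2 hj1 hR).1
        have hnext : inR w (j+1) = true := inR_self_of_g hF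
        exact ⟨by omega, fun _ h => by rw [hnext] at h; exact absurd h (by simp)⟩
    · -- in run at j
      have hup : hgt w (j+1) = hgt w j + 1 := by
        rw [hgt, letterF_of_inR hR]; simp
      have h0 := IHj.1
      refine ⟨by omega, fun _ hR1 => ⟨by omega, fun _ => ?_⟩⟩
      -- exit of a run : previous three letters are U
      rcases j with _ | _ | k
      · -- j = 0 : contradiction
        have : g w 0 = true := by simpa [inR] using hR
        have : inR w 1 = true := inR_succ_of_g this
        rw [this] at hR1; exact absurd hR1 (by simp)
      · -- j = 1 : contradiction
        have h1 : (g w 1 || g w 0) = true := by simpa [inR] using hR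
        have : inR w 2 = true := by
          rcases Bool.or_eq_true_iff.mp h1 with h | h
          · exact inR_succ_of_g h
          · exact inR_succ2_of_g h
        rw [this] at hR1; exact absurd hR1 (by simp)
      · -- j = k+2
        have hR1' : g w (k+3) = false ∧ g w (k+2) = false ∧ g w (k+1) = false := by
          have : (g w (k+3) || g w (k+2) || g w (k+1)) = false := by
            simpa [inR] using hR1
          simp at this; tauto
        have hk : g w k = true := by
          have : (g w (k+2) || g w (k+1) || g w k) = true := by simpa [inR] using hR
          simp [hR1'.2.1, hR1'.2.2] at this; exact this
        have l0 : letterF w k = true := letterF_of_inR (inR_self_of_g hk)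
        have l1 : letterF w (k+1) = true := letterF_of_inR (inR_succ_of_g hk)
        have l2 : letterF w (k+2) = true := letterF_of_inR (inR_succ2_of_g hk)
        have e0 : hgt w (k+1) = hgt w k + 1 := by rw [hgt, l0]; simp
        have e1 : hgt w (k+2) = hgt w (k+1) + 1 := by rw [hgt, l1]; simp
        have e2 : hgt w (k+3) = hgt w (k+2) + 1 := by rw [hgt, l2]; simp
        have hk0 := (IH k (by omega)).1
        show (2:ℤ) ≤ hgt w (k+3)
        omega

lemma take_realize (w : List Bool) (n k : ℕ) (h : k ≤ n) :
    (realize w n).take k = (List.range k).map (letterF w) := by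
  rw [realize, ← List.map_take, List.take_range, min_eq_left h]

lemma count_range_map (w : List Bool) : ∀ k : ℕ,
    ((((List.range k).map (letterF w)).count true : ℤ) -
      (((List.range k).map (letterF w)).count false : ℤ)) = hgt w k := by
  intro k
  induction k with
  | zero => simp [hgt]
  | succ k ih =>
    rw [List.range_succ, List.map_append, List.count_append, List.count_append, hgt, ← ih]
    cases hl : letterF w k <;> simp [hl] <;> push_cast <;> ring

lemma ballot_realize (w : List Bool) (n : ℕ) (hS : ¬(g w 0 = false ∧ g w 1 = true)) :
    IsBallot (realize w n) := by
  intro k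
  rcases le_or_gt k n with h | h
  · have h1 := count_range_map w k
    rw [← take_realize w n k h] at h1
    have h2 := (hgt_invariant w hS k).1
    omega
  · have : (realize w n).take k = (realize w n).take n := by
      rw [List.take_of_length_le (by simp; omega), List.take_of_length_le (by simp)]
    rw [this]
    have h1 := count_range_map w n
    rw [← take_realize w n n le_rfl] at h1
    have h2 := (hgt_invariant w hS n).1
    omega

lemma not_occursAt_of_short {p : List Bool} {i : ℕ} (h : p.length < i + 3) :
    ¬ OccursAt [true, true, true] p i := by
  rw [occursAt_iff]
  simp [occB_eq_false p i (by omega)]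

lemma occB_parts {p : List Bool} {j : ℕ} (h : occB p j = true) :
    g p j = true ∧ g p (j+1) = true ∧ g p (j+2) = true := by
  simpa [occB, Bool.and_assoc] using h

lemma occB_of_parts {p : List Bool} {j : ℕ} (h1 : g p j = true) (h2 : g p (j+1) = true)
    (h3 : g p (j+2) = true) : occB p j = true := by simp [occB, h1, h2, h3]

lemma occB_ballot_zero {p : List Bool} (hb : IsBallot p) (h1 : occB p 1 = true) :
    occB p 0 = true := by
  obtain ⟨hg1, hg2, hg3⟩ := occB_parts h1
  rcases p with _ | ⟨b, l⟩
  · simp at hg1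
  · have hb1 := hb 1
    cases b
    · simp [List.take, List.count_cons] at hb1
    · exact occB_of_parts rfl hg1 hg2

lemma charWord_mem_Wd {p : List Bool} {m : ℕ} (hb : IsBallot p) (hl : p.length ≤ m + 2) :
    charWord p m ∈ Wd m St.q0 := by
  rw [mem_Wd]
  have e : ∀ i, g (charWord p m) i = occB p i := g_charWord p m hl
  refine ⟨charWord_length p m, (okF_iff _ _).mpr ⟨?_, ?_⟩⟩
  · intro j
    constructor
    · rintro ⟨h1, h2, h3⟩
      rw [e] at h1 h2 h3
      obtain ⟨a1, a2, a3⟩ := occB_parts h1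
      obtain ⟨b1, b2, b3⟩ := occB_parts h3
      have : occB p (j+1) = true := occB_of_parts a2 a3 b2
      rw [h2] at this; exact absurd this (by simp)
    · rintro ⟨h1, h2, h3, h4⟩
      rw [e] at h1 h2 h3 h4
      obtain ⟨a1, a2, a3⟩ := occB_parts h1
      obtain ⟨b1, b2, b3⟩ := occB_parts h4
      have : occB p (j+1) = true := occB_of_parts a2 a3 b1
      rw [h2] at this; exact absurd this (by simp)
  · show ¬(g (charWord p m) 0 = false ∧ g (charWord p m) 1 = true)
    rw [e, e]
    rintro ⟨h0, h1⟩
    rw [occB_ballot_zero hb h1] at h0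
    exact absurd h0 (by simp)

lemma charWord_eq_iff {p q : List Bool} {n m : ℕ} (hp : p.length = n) (hq : q.length = n)
    (hn : n ≤ m + 2) :
    charWord p m = charWord q m ↔
      (∀ i, OccursAt [true,true,true] p i ↔ OccursAt [true,true,true] q i) := by
  constructor
  · intro h i
    rw [occursAt_iff, occursAt_iff]
    have h2 := congrArg (fun l => g l i) h
    simp only [g_charWord p m (by omega), g_charWord q m (by omega)] at h2
    rw [h2]
  · intro h
    apply List.ext_getElem (by simp)
    intro i h1 h2
    rw [← g_eq_getElem _ _ h1, ← g_eq_getElem _ _ h2,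
      g_charWord p m (by omega), g_charWord q m (by omega)]
    have h3 := (occursAt_iff p i).symm.trans ((h i).trans (occursAt_iff q i))
    cases hx : occB p i <;> cases hy : occB q i <;> simp_all

lemma charWord_realize (w : List Bool) (m : ℕ) (hN : NoF w) (hwl : w.length = m) :
    charWord (realize w (m+2)) m = w := by
  apply List.ext_getElem (by simp [hwl])
  intro i h1 h2
  rw [← g_eq_getElem _ _ h1, ← g_eq_getElem _ _ h2, g_charWord _ _ (by simp)]
  have l0 : g (realize w (m+2)) i = letterF w i := g_realize_lt _ _ _ (by simp at h1; omega)
  have l1 : g (realize w (m+2)) (i+1) = letterF w (i+1) :=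
    g_realize_lt _ _ _ (by simp at h1; omega)
  have l2 : g (realize w (m+2)) (i+2) = letterF w (i+2) :=
    g_realize_lt _ _ _ (by simp at h1; omega)
  rw [occB, l0, l1, l2]
  cases hgi : g w i
  · rcases letters_not_all hN hgi with h | h | h <;> simp [h]
  · obtain ⟨a1, a2, a3⟩ := letters_all_true hgi
    simp [a1, a2, a3]

theorem uuu_classes_ballot' (n : ℕ) (hn : 1 ≤ n) :
    numBallotClasses [true, true, true] n = Nat.fib n := by
  rcases eq_or_lt_of_le hn with h1 | h2
  · -- n = 1
    rw [← h1]
    rw [numBallotClasses, show Nat.fib 1 = 1 from rfl, Nat.card_eq_one_iff_unique]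
    constructor
    · constructor
      intro a b
      refine Quotient.inductionOn₂ a b fun p q => ?_
      apply Quotient.sound
      refine ⟨p.2.2.trans q.2.2.symm, fun i => ?_⟩
      have hp := not_occursAt_of_short (p := p.1) (i := i) (by rw [p.2.2]; omega)
      have hq := not_occursAt_of_short (p := q.1) (i := i) (by rw [q.2.2]; omega)
      exact iff_of_false hp hq
    · exact ⟨⟦⟨[true], fun k => by cases k <;> simp, rfl⟩⟧⟩
  · -- n ≥ 2
    obtain ⟨m, rfl⟩ : ∃ m, n = m + 2 := ⟨n - 2, by omega⟩
    have hball : ∀ p : {p : List Bool // IsBallot p ∧ p.length = m + 2},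
        charWord p.1 m ∈ Wd m St.q0 := fun p => charWord_mem_Wd p.2.1 (le_of_eq p.2.2)
    let F : Quotient (ballotSetoid [true,true,true] (m+2)) → {w // w ∈ Wd m St.q0} :=
      Quotient.lift (fun p => ⟨charWord p.1 m, hball p⟩)
        (fun p q h => Subtype.ext ((charWord_eq_iff p.2.2 q.2.2 (by omega)).mpr h.2))
    have hbij : Function.Bijective F := by
      constructor
      · intro a b
        refine Quotient.inductionOn₂ a b fun p q h => ?_
        apply Quotient.sound
        have he : charWord p.1 m = charWord q.1 m := congrArg Subtype.val h
        exact ⟨p.2.2.trans q.2.2.symm, (charWord_eq_iff p.2.2 q.2.2 (by omega)).mp he⟩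
      · rintro ⟨w, hw⟩
        obtain ⟨hwl, hok⟩ := (mem_Wd m St.q0 w).mp hw
        obtain ⟨hN, hS⟩ := (okF_iff w St.q0).mp hok
        refine ⟨⟦⟨realize w (m+2), ballot_realize w (m+2) hS, realize_length w (m+2)⟩⟧, ?_⟩
        apply Subtype.ext
        show charWord (realize w (m+2)) m = w
        exact charWord_realize w m hN hwl
    rw [numBallotClasses, Nat.card_eq_of_bijective F hbij, Nat.card_eq_finsetCard,
      card_q0_fib]

end UUU

/-- the number of UUU-equivalence classes of ballot paths of length
`n ≥ 1` is the `n`-th Fibonacci number. -/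
theorem uuu_classes_ballot (n : ℕ) (hn : 1 ≤ n) :
    numBallotClasses [true, true, true] n = Nat.fib n :=
  UUU.uuu_classes_ballot' n hn
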